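/- Let (R, m) be a Noetherian local ring of dimension d and characteristic p > 0, J an m-primary ideal, I an arbitrary ideal, and M a finitely generated R-module. Then there exists a constant D such that for all powers q, q' of p, length(M/(I^{[q]} + J^{[qq']})M) ≤ D · (q')^{dim R/I} · q^{dim M}. -/

import Mathlib

open Filter IsLocalRing

noncomputable section

variable {R : Type*} [CommRing R]

/-- The `q`-th Frobenius power `I^{[q]}` of an ideal `I`. -/
def fpow (I : Ideal R) (q : ℕ) : Ideal R := Ideal.span ((fun x => x ^ q) '' (I : Set R))

/-- The length of `R ⧸ I` as an `R`-module, as a natural number. -/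
def qlen (I : Ideal R) : ℕ := ((Order.krullDim (Submodule R (R ⧸ I))).unbotD 0).toNat

/-- The length of `R ⧸ I` as an `R`-module, in `ℕ∞`. -/
def lenE (I : Ideal R) : ℕ∞ := (Order.krullDim (Submodule R (R ⧸ I))).unbotD 0

/-- The tight closure `I*` of an ideal `I` in a ring of characteristic `p`. -/
def tightClosure (p : ℕ) (I : Ideal R) : Ideal R :=
  Ideal.span {x | ∃ c : R, (∀ P ∈ minimalPrimes R, c ∉ P) ∧
    ∃ e₀ : ℕ, ∀ e ≥ e₀, c * x ^ p ^ e ∈ fpow I (p ^ e)}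

/-- `c` is a test element: `c` avoids all minimal primes and for every ideal `I`,
`x ∈ I*` iff `c x^q ∈ I^{[q]}` for all `q = p^e`. -/
def IsTestElement (p : ℕ) (c : R) : Prop :=
  (∀ P ∈ minimalPrimes R, c ∉ P) ∧
    ∀ (I : Ideal R) (x : R), x ∈ tightClosure p I ↔ ∀ e : ℕ, c * x ^ p ^ e ∈ fpow I (p ^ e)

end


/-- Length of `M ⧸ N` in `ℕ∞`. -/
noncomputable def mlenE (R : Type*) [CommRing R] (M : Type*) [AddCommGroup M] [Module R M]
    (N : Submodule R M) : ℕ∞ :=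
  (Order.krullDim (Submodule R (M ⧸ N))).unbotD 0

/-!
Pick `x₁, …, x_t ∈ 𝔪` with `I + (x)` and `y₁, …, y_d ∈ 𝔪` with `Ann M + (y)` both `𝔪`-primary
(`d = dim M`). As `M` is a quotient of `(R ⧸ Ann M)ⁿ`, it suffices to bound the length of
`R ⧸ (I^[q] + J^[qq'] + Ann M)`. The key estimate is `ℓ(R/(𝔟 + (zᵏ))) ≤ k^{#z} ℓ(R/(𝔟 + (z)))`.
Since `𝔪^N₀ ⊆ J`, the ideal contains `I^[q] + Ann M + (x^{q N₀ q'})`, which costs `(N₀ q')^t`;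
then `I^[q] + (x^q) = (I + (x))^[q]` contains `y^{N₁ q}`, which costs `(N₁ q)^d` times the finite
length of `R ⧸ (Ann M + (y))`.
-/

open Module

section Length

variable {R M : Type*} [CommRing R] [AddCommGroup M] [Module R M]

theorem mlenE_eq_length (N : Submodule R M) : mlenE R M N = length R (M ⧸ N) := by
  rw [mlenE, ← coe_length, WithBot.unbotD_coe]

theorem length_quotient_le_of_le {A B : Submodule R M} (h : A ≤ B) :
    length R (M ⧸ B) ≤ length R (M ⧸ A) :=
  length_le_of_surjective (Submodule.factor h) (Submodule.factor_surjective h)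

theorem length_quotient_eq_length_map_add {A B : Submodule R M} (h : A ≤ B) :
    length R (M ⧸ A) = length R (B.map A.mkQ) + length R (M ⧸ B) := by
  let N := B.map A.mkQ
  rw [length_eq_add_of_exact N.subtype N.mkQ N.injective_subtype N.mkQ_surjective
    (LinearMap.exact_subtype_mkQ N), (Submodule.quotientQuotientEquivQuotient A B h).length_eq]

theorem length_span_singleton_le {c : Ideal R} {x : M} (h : c ≤ Ideal.torsionOf R M x) :
    length R (R ∙ x) ≤ length R (R ⧸ c) :=
  (Ideal.quotTorsionOfEquivSpanSingleton R M x).length_eq.symm.trans_le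
    (length_quotient_le_of_le h)

theorem length_le_card_mul_length_quotient {ι : Type*} [Fintype ι] {v : ι → M}
    (hv : Submodule.span R (Set.range v) = ⊤) {c : Ideal R} (hc : c ≤ annihilator R M) :
    length R M ≤ Fintype.card ι * length R (R ⧸ c) := by
  have hker (i : ι) : c ≤ Ideal.torsionOf R M (v i) := fun r hr => mem_annihilator.mp (hc hr) _
  let g : (ι → R ⧸ c) →ₗ[R] M := ∑ i, (c.liftQ _ (hker i)).comp (LinearMap.proj i)
  have hg : Function.Surjective g := by
    intro m
    obtain ⟨a, rfl⟩ :=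
      (Submodule.mem_span_range_iff_exists_fun R).mp (hv ▸ Submodule.mem_top : m ∈ _)
    refine ⟨fun i => c.mkQ (a i), ?_⟩
    simp only [g, LinearMap.coe_sum, Finset.sum_apply, LinearMap.comp_apply, LinearMap.proj_apply]
    rfl
  simpa using length_le_of_surjective g hg

theorem length_quotient_smul_top_le {ι : Type*} [Fintype ι] {v : ι → M}
    (hv : Submodule.span R (Set.range v) = ⊤) (a : Ideal R) :
    length R (M ⧸ a • (⊤ : Submodule R M)) ≤
      Fintype.card ι * length R (R ⧸ (a ⊔ annihilator R M)) := by
  let N := a • (⊤ : Submodule R M)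
  refine length_le_card_mul_length_quotient (v := N.mkQ ∘ v) ?_ (sup_le ?_ ?_)
  · rw [Set.range_comp, ← Submodule.map_span, hv, Submodule.map_top, Submodule.range_mkQ]
  · intro r hr
    rw [mem_annihilator]
    rintro ⟨m⟩
    exact (Submodule.Quotient.mk_eq_zero N).mpr (Submodule.smul_mem_smul hr Submodule.mem_top)
  · exact LinearMap.annihilator_le_of_surjective N.mkQ N.mkQ_surjective

end Length

section Powers

variable {R : Type*} [CommRing R]

open Ideal

theorem length_quotient_sup_span_pow_succ_le (b : Ideal R) (y : R) (n : ℕ) :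
    length R (R ⧸ (b ⊔ span {y ^ (n + 1)})) ≤
      length R (R ⧸ (b ⊔ span {y})) + length R (R ⧸ (b ⊔ span {y ^ n})) := by
  set A := b ⊔ span {y ^ (n + 1)}
  have hAB : A ≤ b ⊔ span {y ^ n} :=
    sup_le_sup_left (span_singleton_le_span_singleton.mpr (pow_dvd_pow y n.le_succ)) b
  -- `(b + (yⁿ)) / A` is cyclic, generated by `yⁿ` and killed by `b + (y)`
  have hmap : Submodule.map A.mkQ (b ⊔ span {y ^ n}) = R ∙ A.mkQ (y ^ n) := by
    rw [Submodule.map_sup, span, Submodule.map_span, Set.image_singleton,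
      LinearMap.le_ker_iff_map.mp (A.ker_mkQ.symm ▸ le_sup_left), bot_sup_eq]
  have hkill : b ⊔ span {y} ≤ torsionOf R (R ⧸ A) (A.mkQ (y ^ n)) := by
    intro r hr
    rw [mem_torsionOf_iff, Submodule.mkQ_apply, ← Submodule.Quotient.mk_smul,
      Submodule.Quotient.mk_eq_zero, smul_eq_mul]
    obtain ⟨s, hs, t, ht, rfl⟩ := Submodule.mem_sup.mp hr
    obtain ⟨u, rfl⟩ := mem_span_singleton'.mp ht
    rw [add_mul, mul_assoc, ← pow_succ']
    exact add_mem ((le_sup_left : b ≤ A) (b.mul_mem_right _ hs))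
      ((le_sup_right : span {y ^ (n + 1)} ≤ A) (mul_mem_left _ _ (mem_span_singleton_self _)))
  rw [length_quotient_eq_length_map_add hAB, hmap]
  gcongr
  exact length_span_singleton_le hkill

theorem length_quotient_sup_span_pow_le (b : Ideal R) (y : R) (n : ℕ) :
    length R (R ⧸ (b ⊔ span {y ^ n})) ≤ n * length R (R ⧸ (b ⊔ span {y})) := by
  induction n with
  | zero => simp [length_eq_zero]
  | succ n ih =>
    calc _ ≤ length R (R ⧸ (b ⊔ span {y})) + length R (R ⧸ (b ⊔ span {y ^ n})) :=
          length_quotient_sup_span_pow_succ_le b y n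
      _ ≤ length R (R ⧸ (b ⊔ span {y})) + n * length R (R ⧸ (b ⊔ span {y})) := by gcongr
      _ = (n + 1 : ℕ) * length R (R ⧸ (b ⊔ span {y})) := by push_cast; ring

theorem length_quotient_sup_span_image_pow_le {ι : Type*} (b : Ideal R) (F : Finset ι)
    (f : ι → R) (n : ℕ) :
    length R (R ⧸ (b ⊔ span ((f · ^ n) '' F))) ≤
      n ^ F.card * length R (R ⧸ (b ⊔ span (f '' F))) := by
  classical
  induction F using Finset.induction generalizing b with
  | empty =>
    rw [Finset.coe_empty, Set.image_empty, Set.image_empty, Finset.card_empty, pow_zero, one_mul]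
  | insert i F hiF ih =>
    have hrot (s : Set R) (x : R) : b ⊔ span (insert x s) = b ⊔ span s ⊔ span {x} := by
      rw [span_insert, sup_comm (span {x}), sup_assoc]
    calc _ = length R (R ⧸ (b ⊔ span ((f · ^ n) '' F) ⊔ span {f i ^ n})) := by
          rw [Finset.coe_insert, Set.image_insert_eq, hrot]
      _ ≤ n * length R (R ⧸ (b ⊔ span ((f · ^ n) '' F) ⊔ span {f i})) :=
          length_quotient_sup_span_pow_le _ _ n
      _ = n * length R (R ⧸ (b ⊔ span {f i} ⊔ span ((f · ^ n) '' F))) := by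
          rw [sup_right_comm]
      _ ≤ n * (n ^ F.card * length R (R ⧸ (b ⊔ span {f i} ⊔ span (f '' F)))) := by
          grw [ih]
      _ = n ^ (insert i F).card * length R (R ⧸ (b ⊔ span (f '' (insert i F : Finset ι)))) := by
          rw [Finset.card_insert_of_notMem hiF, Finset.coe_insert, Set.image_insert_eq, hrot,
            sup_right_comm]
          ring

theorem length_quotient_le_pow_card_mul {ι : Type*} {b K : Ideal R} {F : Finset ι} {f : ι → R}
    {n : ℕ} (hb : b ≤ K) (hF : ∀ i ∈ F, f i ^ n ∈ K) :
    length R (R ⧸ K) ≤ n ^ F.card * length R (R ⧸ (b ⊔ span (f '' F))) := by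
  refine (length_quotient_le_of_le (sup_le hb ?_)).trans
    (length_quotient_sup_span_image_pow_le b F f n)
  rw [span_le]
  rintro _ ⟨i, hi, rfl⟩
  exact hF i hi

end Powers

section Frobenius

variable {R : Type*} [CommRing R]

open Ideal

theorem length_quotient_sup_fpow_mul_le (b J : Ideal R) {F : Finset R} {N : ℕ}
    (hF : ∀ x ∈ F, x ^ N ∈ J) (q q' : ℕ) :
    length R (R ⧸ (b ⊔ fpow J (q * q'))) ≤
      (N * q') ^ F.card * length R (R ⧸ (b ⊔ span ((· ^ q) '' F))) := by
  refine length_quotient_le_pow_card_mul le_sup_left fun x hx => mem_sup_right ?_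
  rw [← pow_mul, mul_left_comm, pow_mul]
  exact subset_span ⟨_, hF x hx, rfl⟩

variable {p : ℕ} [ExpChar R p]

theorem fpow_pow_eq_map (I : Ideal R) (e : ℕ) : fpow I (p ^ e) = I.map (iterateFrobenius R p e) :=
  rfl

theorem pow_mul_mem_fpow_sup_span {I : Ideal R} {F : Set R} {y : R} {N : ℕ} (e : ℕ)
    (h : y ^ N ∈ I ⊔ span F) : y ^ (N * p ^ e) ∈ fpow I (p ^ e) ⊔ span ((· ^ p ^ e) '' F) := by
  have := mem_map_of_mem (iterateFrobenius R p e) h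
  rwa [Ideal.map_sup, map_span, ← fpow_pow_eq_map, iterateFrobenius_def, ← pow_mul] at this

theorem length_quotient_fpow_sup_span_image_le (I b : Ideal R) {F G : Finset R} {N : ℕ}
    (hG : ∀ y ∈ G, y ^ N ∈ I ⊔ span F) (e : ℕ) :
    length R (R ⧸ (fpow I (p ^ e) ⊔ b ⊔ span ((· ^ p ^ e) '' F))) ≤
      (N * p ^ e) ^ G.card * length R (R ⧸ (b ⊔ span G)) := by
  rw [← Set.image_id' (G : Set R)]
  refine length_quotient_le_pow_card_mul (le_sup_right.trans le_sup_left) fun y hy => ?_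
  exact (sup_le_sup_right le_sup_left _ : _ ≤ fpow I (p ^ e) ⊔ b ⊔ _)
    (pow_mul_mem_fpow_sup_span e (hG y hy))

end Frobenius

namespace IsLocalRing

variable {R : Type*} [CommRing R] [IsLocalRing R]

open Ideal

theorem radical_eq_maximalIdeal_of_mem_minimalPrimes {K : Ideal R}
    (h : maximalIdeal R ∈ K.minimalPrimes) : K.radical = maximalIdeal R := by
  rw [← sInf_minimalPrimes]
  exact le_antisymm (sInf_le h) (le_sInf fun P hP => h.2 hP.1 (le_maximalIdeal hP.1.1.ne_top))

variable [IsNoetherianRing R]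

theorem exists_finset_card_eq_radical_sup_span_eq {B : Ideal R} {δ : ℕ}
    (h : ringKrullDim (R ⧸ B) = δ) :
    ∃ F : Finset R, F.card = δ ∧ (B ⊔ span F).radical = maximalIdeal R := by
  have hmk := Ideal.Quotient.mk_surjective (I := B)
  have : Nontrivial (R ⧸ B) := by
    by_contra hB
    have := not_nontrivial_iff_subsingleton.mp hB
    exact WithBot.bot_ne_coe (ringKrullDim_eq_bot_of_subsingleton.symm.trans h)
  have : IsLocalRing (R ⧸ B) := .of_surjective' _ hmk
  have : IsLocalHom (Ideal.Quotient.mk B) := .of_surjective _ hmk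
  obtain ⟨s, hs, hcard⟩ := (maximalIdeal (R ⧸ B)).exists_finset_card_eq_height_of_isNoetherianRing
  let F := s.map ⟨Function.surjInv hmk, Function.injective_surjInv hmk⟩
  have hF : span (s : Set (R ⧸ B)) = (span F).map (Ideal.Quotient.mk B) := by
    rw [map_span, Finset.coe_map, Set.image_image]
    simp [Function.surjInv_eq hmk]
  refine ⟨F, ?_, radical_eq_maximalIdeal_of_mem_minimalPrimes ?_⟩
  · rw [Finset.card_map, ← Nat.cast_inj (R := WithBot ℕ∞), ← h,
      ← maximalIdeal_height_eq_ringKrullDim, ← hcard]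
    rfl
  · have := minimalPrimes_comap_of_surjective hmk hs
    rwa [maximalIdeal_comap, hF, comap_map_of_surjective' _ hmk, mk_ker, sup_comm] at this

theorem exists_pow_mem_of_radical_eq_maximalIdeal {K : Ideal R}
    (hK : K.radical = maximalIdeal R) : ∃ N : ℕ, ∀ x ∈ maximalIdeal R, x ^ N ∈ K := by
  obtain ⟨N, hN⟩ := K.exists_radical_pow_le_of_fg (hK ▸ IsNoetherian.noetherian _)
  exact ⟨N, fun x hx => hN (pow_mem_pow (hK ▸ hx) N)⟩

theorem length_quotient_ne_top_of_radical_eq_maximalIdeal {K : Ideal R}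
    (hK : K.radical = maximalIdeal R) : length R (R ⧸ K) ≠ ⊤ := by
  have hmin : maximalIdeal R ∈ K.minimalPrimes := by
    rw [← radical_minimalPrimes, hK, minimalPrimes_eq_subsingleton_self]
    rfl
  have := quotient_artinian_of_mem_minimalPrimes_of_isLocalRing K hmin
  have := isArtinian_of_surjective_algebraMap (M := R ⧸ K) (Ideal.Quotient.mk_surjective (I := K))
  exact length_ne_top

end IsLocalRing

open Ideal in
/-- Uniform bound
`length(M/(I^{[q]} + J^{[qq']})M) ≤ D · q'^{dim R/I} · q^{dim M}`. -/
theorem stmt7 {R : Type*} [CommRing R] [IsNoetherianRing R] [IsLocalRing R]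
    (p : ℕ) (hp : p.Prime) [CharP R p]
    (J : Ideal R) (hJ : J.radical = maximalIdeal R) (I : Ideal R)
    (t : ℕ) (ht : ringKrullDim (R ⧸ I) = t)
    (M : Type*) [AddCommGroup M] [Module R M] [Module.Finite R M]
    (dM : ℕ) (hdM : ringKrullDim (R ⧸ (⊤ : Submodule R M).annihilator) = dM) :
    ∃ D : ℕ, ∀ e e' : ℕ,
      mlenE R M ((fpow I (p ^ e) ⊔ fpow J (p ^ e * p ^ e')) • (⊤ : Submodule R M)) ≤
        (D * (p ^ e') ^ t * (p ^ e) ^ dM : ℕ) := by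
  have : ExpChar R p := .prime hp
  rw [Submodule.annihilator_top] at hdM
  obtain ⟨F, rfl, hF⟩ := exists_finset_card_eq_radical_sup_span_eq ht
  obtain ⟨G, rfl, hG⟩ := exists_finset_card_eq_radical_sup_span_eq hdM
  have mem_max {B : Ideal R} {S : Finset R} (hB : (B ⊔ span S).radical = maximalIdeal R)
      {x : R} (hx : x ∈ S) : x ∈ maximalIdeal R :=
    hB ▸ le_radical (mem_sup_right (subset_span hx))
  obtain ⟨N₀, hN₀⟩ := exists_pow_mem_of_radical_eq_maximalIdeal hJ
  obtain ⟨N₁, hN₁⟩ := exists_pow_mem_of_radical_eq_maximalIdeal hF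
  obtain ⟨L, hL⟩ := ENat.ne_top_iff_exists.mp (length_quotient_ne_top_of_radical_eq_maximalIdeal hG)
  obtain ⟨n, v, hv⟩ := Module.Finite.exists_fin (R := R) (M := M)
  refine ⟨n * N₀ ^ F.card * N₁ ^ G.card * L, fun e e' => ?_⟩
  calc _ = length R (M ⧸ (fpow I (p ^ e) ⊔ fpow J (p ^ e * p ^ e')) • (⊤ : Submodule R M)) :=
        mlenE_eq_length _
    _ ≤ n * length R (R ⧸ (fpow I (p ^ e) ⊔ fpow J (p ^ e * p ^ e') ⊔ annihilator R M)) := by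
        simpa using length_quotient_smul_top_le hv _
    _ ≤ n * ((N₀ * ↑(p ^ e')) ^ F.card * ((N₁ * p ^ e) ^ G.card * L)) := by
        grw [sup_right_comm, length_quotient_sup_fpow_mul_le _ J fun x hx => hN₀ x (mem_max hF hx),
          length_quotient_fpow_sup_span_image_le I _ (fun y hy => hN₁ y (mem_max hG hy)) e, hL]
    _ = _ := by push_cast; ring
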